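/- The series ∑_{n=0}^∞ (1/4)^n · binom(2n,n)/(4n+3) equals √(2π^3)/Γ(1/4)^2, and it equals the integral ∫_0^1 t^2/√(1−t^4) dt. -/

import Mathlib

/-!
The coefficients `centralBinom n / 4 ^ n = (1/2)ₙ / n!` are those of the binomial series of
`(1 - x)^(-1/2)`, so `∑ₙ centralBinom n / 4 ^ n * t ^ (4n + 2) = t² / √(1 - t⁴)` on `(0, 1)`.
Integrating term by term (the terms are nonnegative and the sum is integrable) identifies the
series with `∫₀¹ t² / √(1 - t⁴) dt`. The substitution `u = t⁴` turns this integral into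
`B(3/4, 1/2) / 4 = Γ(3/4) Γ(1/2) / (4 Γ(5/4))`, and the reflection formula
`Γ(1/4) Γ(3/4) = π √2` gives the closed form.
-/

open Real Nat MeasureTheory Set

theorem ascPochhammer_eval_one_half {K : Type*} [Field K] [CharZero K] (n : ℕ) :
    (ascPochhammer K n).eval (1 / 2 : K) = n ! * n.centralBinom / 4 ^ n := by
  induction n with
  | zero => simp
  | succ n ih =>
    have h : ((n : K) + 1) * (n + 1).centralBinom = 2 * (2 * n + 1) * n.centralBinom := by
      exact_mod_cast Nat.succ_mul_centralBinom_succ n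
    rw [ascPochhammer_succ_eval, ih, Nat.factorial_succ, pow_succ]
    push_cast
    field_simp
    linear_combination (-2 * (n ! : K)) * h

theorem Ring.multichoose_one_half (n : ℕ) :
    Ring.multichoose (1 / 2 : ℝ) n = n.centralBinom / 4 ^ n := by
  have h := Ring.factorial_nsmul_multichoose_eq_ascPochhammer (1 / 2 : ℝ) n
  rw [Polynomial.ascPochhammer_smeval_eq_eval, ascPochhammer_eval_one_half, nsmul_eq_mul] at h
  have : (n ! : ℝ) ≠ 0 := by positivity
  field_simp at h ⊢
  linear_combination h

theorem hasSum_centralBinom_div_four_pow_mul_pow {x : ℝ} (hx : |x| < 1) :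
    HasSum (fun n : ℕ => n.centralBinom / 4 ^ n * x ^ n) (√(1 - x))⁻¹ := by
  have hx' : x ∈ Metric.eball (0 : ℝ) 1 := by
    simpa [← ENNReal.ofReal_one, Metric.eball_ofReal] using hx
  have h := (one_div_one_sub_rpow_hasFPowerSeriesOnBall_zero (1 / 2)).hasSum hx'
  simp only [FormalMultilinearSeries.ofScalars_apply_eq, smul_eq_mul, ← Ring.multichoose_eq,
    Ring.multichoose_one_half, zero_add] at h
  rwa [sqrt_eq_rpow, ← one_div]

theorem hasSum_centralBinom_div_four_pow_mul_pow_four_mul_add_two {t : ℝ} (ht : |t| < 1) :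
    HasSum (fun n : ℕ => n.centralBinom / 4 ^ n * t ^ (4 * n + 2)) (t ^ 2 / √(1 - t ^ 4)) := by
  have ht4 : |t ^ 4| < 1 := by
    rw [abs_pow]
    exact pow_lt_one₀ (abs_nonneg t) ht (by norm_num)
  rw [div_eq_inv_mul]
  exact ((hasSum_centralBinom_div_four_pow_mul_pow ht4).mul_right (t ^ 2)).congr_fun
    fun n => by ring

theorem intervalIntegrable_sq_div_sqrt_one_sub_pow_four :
    IntervalIntegrable (fun t : ℝ => t ^ 2 / √(1 - t ^ 4)) volume 0 1 := by
  have hdom : IntervalIntegrable (fun t : ℝ => (1 - t) ^ (-(1 / 2) : ℝ)) volume 0 1 := by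
    simpa using ((intervalIntegral.intervalIntegrable_rpow' (r := -(1 / 2)) (a := 0) (b := 1)
      (by norm_num)).comp_sub_left 1).symm
  refine hdom.mono_fun (Measurable.aestronglyMeasurable (by fun_prop)) ?_
  rw [uIoc_of_le zero_le_one]
  refine (ae_restrict_iff' measurableSet_Ioc).2 (ae_of_all _ fun t ⟨ht0, ht1⟩ => ?_)
  simp only [norm_of_nonneg (by positivity : 0 ≤ t ^ 2 / √(1 - t ^ 4)),
    norm_of_nonneg (by positivity : (0 : ℝ) ≤ (1 - t) ^ (-(1 / 2) : ℝ))]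
  rcases ht1.eq_or_lt with rfl | ht1
  · simp
  have ht4 : t ^ 4 ≤ t := pow_le_of_le_one ht0.le ht1.le (by norm_num)
  rw [rpow_neg (by linarith), ← sqrt_eq_rpow, ← one_div]
  calc t ^ 2 / √(1 - t ^ 4) ≤ 1 / √(1 - t ^ 4) :=
        div_le_div_of_nonneg_right (pow_le_one₀ ht0.le ht1.le) (sqrt_nonneg _)
    _ ≤ 1 / √(1 - t) :=
        one_div_le_one_div_of_le (sqrt_pos.2 (by linarith)) (sqrt_le_sqrt (by linarith))

theorem hasSum_centralBinom_div_four_pow_div_four_mul_add_three :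
    HasSum (fun n : ℕ => (n.centralBinom : ℝ) / 4 ^ n / (4 * n + 3))
      (∫ t in (0 : ℝ)..1, t ^ 2 / √(1 - t ^ 4)) := by
  set F : ℕ → ℝ → ℝ := fun n t => n.centralBinom / 4 ^ n * t ^ (4 * n + 2) with hF
  have hF_nonneg (n : ℕ) (t : ℝ) : 0 ≤ F n t := by
    have : t ^ (4 * n + 2) = (t ^ (2 * n + 1)) ^ 2 := by ring
    simp only [hF, this]
    positivity
  have hsum : ∀ᵐ t : ℝ, t ∈ uIoc (0 : ℝ) 1 → HasSum (F · t) (t ^ 2 / √(1 - t ^ 4)) := by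
    filter_upwards [Measure.ae_ne volume (1 : ℝ)] with t ht1 ht
    rw [uIoc_of_le zero_le_one] at ht
    exact hasSum_centralBinom_div_four_pow_mul_pow_four_mul_add_two
      (abs_lt.2 ⟨by linarith [ht.1], lt_of_le_of_ne ht.2 ht1⟩)
  -- The nonnegative terms are dominated by themselves.
  have hint := intervalIntegral.hasSum_integral_of_dominated_convergence F
    (fun n => Continuous.aestronglyMeasurable (by fun_prop))
    (fun n => ae_of_all _ fun t _ => (norm_of_nonneg (hF_nonneg n t)).le)
    (hsum.mono fun t ht ht' => (ht ht').summable)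
    (intervalIntegrable_sq_div_sqrt_one_sub_pow_four.congr_ae
      ((ae_restrict_iff' measurableSet_uIoc).2 (hsum.mono fun t ht ht' => (ht ht').tsum_eq.symm)))
    hsum
  refine hint.congr_fun fun n => ?_
  simp only [hF, intervalIntegral.integral_const_mul, integral_pow]
  push_cast
  ring

theorem Real.integral_rpow_mul_one_sub_rpow {a b : ℝ} (ha : 0 < a) (hb : 0 < b) :
    ∫ x in (0 : ℝ)..1, x ^ (a - 1) * (1 - x) ^ (b - 1) = Gamma a * Gamma b / Gamma (a + b) := by
  have h := Complex.betaIntegral_eq_Gamma_mul_div a b (by simpa) (by simpa)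
  rw [Complex.betaIntegral, ← Complex.ofReal_add, Complex.Gamma_ofReal, Complex.Gamma_ofReal,
    Complex.Gamma_ofReal] at h
  apply Complex.ofReal_injective
  rw [Complex.ofReal_div, Complex.ofReal_mul, ← h, ← intervalIntegral.integral_ofReal]
  refine intervalIntegral.integral_congr fun x hx => ?_
  rw [uIcc_of_le zero_le_one] at hx
  rw [Complex.ofReal_mul, Complex.ofReal_cpow hx.1, Complex.ofReal_cpow (by linarith [hx.2])]
  push_cast
  rfl

theorem integral_sq_div_sqrt_one_sub_pow_four_eq_beta :
    ∫ t in (0 : ℝ)..1, t ^ 2 / √(1 - t ^ 4)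
      = 1 / 4 * ∫ u in (0 : ℝ)..1, u ^ ((3 / 4 : ℝ) - 1) * (1 - u) ^ ((1 / 2 : ℝ) - 1) := by
  have hsub := integral_Icc_deriv_smul_of_deriv_nonneg (f := fun t : ℝ => t ^ 4)
    (f' := fun t => 4 * t ^ 3) (g := fun u : ℝ => u ^ ((3 / 4 : ℝ) - 1) * (1 - u) ^ ((1 / 2 : ℝ) - 1))
    (by fun_prop) (fun t _ => by simpa using hasDerivAt_pow 4 t)
    (fun t ht => by have := ht.1; positivity) zero_le_one
  simp only [one_pow, ne_eq, OfNat.ofNat_ne_zero, not_false_eq_true, zero_pow,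
    integral_Icc_eq_integral_Ioc] at hsub
  rw [intervalIntegral.integral_of_le zero_le_one, intervalIntegral.integral_of_le zero_le_one,
    ← hsub, ← integral_const_mul]
  refine setIntegral_congr_fun measurableSet_Ioc fun t ⟨ht0, ht1⟩ => ?_
  have hpow : (t ^ 4) ^ ((3 / 4 : ℝ) - 1) = t⁻¹ := by
    rw [← rpow_natCast, ← rpow_mul ht0.le]
    norm_num [rpow_neg_one]
  have hsqrt : (1 - t ^ 4) ^ ((1 / 2 : ℝ) - 1) = (√(1 - t ^ 4))⁻¹ := by
    rw [sqrt_eq_rpow, ← rpow_neg (by nlinarith [pow_le_one₀ ht0.le ht1 (n := 4)])]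
    norm_num
  simp only [smul_eq_mul, hpow, hsqrt]
  field_simp

theorem Real.Gamma_one_fourth_mul_Gamma_three_fourths :
    Gamma (1 / 4) * Gamma (3 / 4) = √2 * π := by
  have h := Gamma_mul_Gamma_one_sub (1 / 4)
  rw [show π * (1 / 4) = π / 4 by ring, sin_pi_div_four] at h
  norm_num at h
  rw [h]
  field_simp
  rw [sq_sqrt zero_le_two]

theorem integral_sq_div_sqrt_one_sub_pow_four :
    ∫ t in (0 : ℝ)..1, t ^ 2 / √(1 - t ^ 4) = √(2 * π ^ 3) / Gamma (1 / 4) ^ 2 := by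
  have hΓ : Gamma (1 / 4) ≠ 0 := (Gamma_pos_of_pos (by norm_num)).ne'
  have hΓ54 : Gamma (3 / 4 + 1 / 2) = 1 / 4 * Gamma (1 / 4) := by
    rw [show (3 / 4 + 1 / 2 : ℝ) = 1 / 4 + 1 by norm_num, Gamma_add_one (by norm_num)]
  have hsqrt : √(2 * π ^ 3) = √2 * π * √π := by
    rw [sqrt_mul (by norm_num), show π ^ 3 = π ^ 2 * π by ring, sqrt_mul (by positivity),
      sqrt_sq pi_pos.le, mul_assoc]
  rw [integral_sq_div_sqrt_one_sub_pow_four_eq_beta,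
    integral_rpow_mul_one_sub_rpow (by norm_num) (by norm_num), hΓ54, Gamma_one_half_eq, hsqrt,
    ← Gamma_one_fourth_mul_Gamma_three_fourths]
  field_simp

theorem stmt16 :
    ∑' n : ℕ, (1 / 4 : ℝ) ^ n * (Nat.centralBinom n : ℝ) / (4 * (n : ℝ) + 3)
        = Real.sqrt (2 * π ^ 3) / Real.Gamma (1 / 4) ^ 2 ∧
      ∑' n : ℕ, (1 / 4 : ℝ) ^ n * (Nat.centralBinom n : ℝ) / (4 * (n : ℝ) + 3)
        = ∫ t in (0 : ℝ)..1, t ^ 2 / Real.sqrt (1 - t ^ 4) := by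
  have hsum : ∑' n : ℕ, (1 / 4 : ℝ) ^ n * (Nat.centralBinom n : ℝ) / (4 * (n : ℝ) + 3)
      = ∫ t in (0 : ℝ)..1, t ^ 2 / √(1 - t ^ 4) := by
    refine (hasSum_centralBinom_div_four_pow_div_four_mul_add_three.congr_fun fun n => ?_).tsum_eq
    rw [one_div, inv_pow, inv_mul_eq_div]
  exact ⟨hsum.trans integral_sq_div_sqrt_one_sub_pow_four, hsum⟩
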